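/- arXiv:2504.06425 — 2 statements merged into one kernel-verified Lean document; each statement's English description precedes it below -/
import Mathlib

section
/- For a fully input convex neural network defined by the recurrence z_{i+1} = g_i(W_i^{(z)} z_i + W_i^{(m)} m + b_i) with z_0 = 0, if all entries of the matrices W_i^{(z)} (for i ≥ 1) are non-negative and each activation g_i is applied componentwise with g_i convex and non-decreasing, then each component of the output z_k is a convex function of the input m. -/
private lemma convexOn_finset_sum {ι E : Type*} [AddCommMonoid E] [Module ℝ E]
    (t : Finset ι) (f : ι → E → ℝ)
    (hf : ∀ i ∈ t, ConvexOn ℝ Set.univ (f i)) :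
    ConvexOn ℝ Set.univ (fun x => ∑ i ∈ t, f i x) := by
  classical
  induction t using Finset.induction_on with
  | empty => simpa using convexOn_const (0 : ℝ) convex_univ
  | @insert a s hnot ih =>
    simp only [Finset.sum_insert hnot]
    exact (hf a (Finset.mem_insert_self a s)).add
      (ih fun i hi => hf i (Finset.mem_insert_of_mem hi))

private lemma convexOn_comp_mono {E : Type*} [AddCommMonoid E] [Module ℝ E]
    {f : E → ℝ} {g : ℝ → ℝ} (hg : ConvexOn ℝ Set.univ g) (hg' : Monotone g)
    (hf : ConvexOn ℝ Set.univ f) : ConvexOn ℝ Set.univ (fun x => g (f x)) := by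
  refine ⟨convex_univ, fun x _ y _ a b ha hb hab => ?_⟩
  calc g (f (a • x + b • y)) ≤ g (a * f x + b * f y) := by
        have := hf.2 (Set.mem_univ x) (Set.mem_univ y) ha hb hab
        exact hg' (by simpa using this)
    _ ≤ a * g (f x) + b * g (f y) := by
        have := hg.2 (Set.mem_univ (f x)) (Set.mem_univ (f y)) ha hb hab
        simpa using this

private lemma convexOn_affine {n : ℕ} (c : Fin n → ℝ) (b0 : ℝ) :
    ConvexOn ℝ Set.univ (fun m : Fin n → ℝ => (∑ q, c q * m q) + b0) := by
  refine ⟨convex_univ, fun x _ y _ a b ha hb hab => ?_⟩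
  apply le_of_eq
  have hb0 : b0 = a * b0 + b * b0 := by rw [← add_mul, hab, one_mul]
  have hq : ∀ q : Fin n, c q * (a • x + b • y) q = a * (c q * x q) + b * (c q * y q) := by
    intro q; simp only [Pi.add_apply, Pi.smul_apply, smul_eq_mul]; ring
  simp only [smul_eq_mul]
  rw [Finset.sum_congr rfl (fun q _ => hq q), Finset.sum_add_distrib,
    ← Finset.mul_sum, ← Finset.mul_sum, mul_add, mul_add]
  linarith [hb0]

/-- FICNN: each output component is convex in the input `m` provided the
`z`-path weights (for layers `i ≥ 1`) are entrywise non-negative and the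
componentwise activations are convex and non-decreasing. -/
theorem ficnn_output_convex {n k : ℕ} (d : ℕ → ℕ)
    (Wz : (i : ℕ) → Matrix (Fin (d (i + 1))) (Fin (d i)) ℝ)
    (Wm : (i : ℕ) → Matrix (Fin (d (i + 1))) (Fin n) ℝ)
    (b : (i : ℕ) → Fin (d (i + 1)) → ℝ)
    (g : ℕ → ℝ → ℝ)
    (z : (i : ℕ) → (Fin n → ℝ) → (Fin (d i) → ℝ))
    (h0 : ∀ m, z 0 m = 0)
    (hrec : ∀ i m j, z (i + 1) m j
      = g i ((Wz i).mulVec (z i m) j + (Wm i).mulVec m j + b i j))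
    (hW : ∀ i, 1 ≤ i → ∀ p q, 0 ≤ Wz i p q)
    (hgconv : ∀ i, ConvexOn ℝ Set.univ (g i))
    (hgmono : ∀ i, Monotone (g i)) :
    ∀ j : Fin (d k), ConvexOn ℝ Set.univ (fun m => z k m j) := by
  induction k with
  | zero =>
    intro j
    have : (fun m : Fin n → ℝ => z 0 m j) = fun _ => 0 := by
      funext m; rw [h0 m]; rfl
    rw [this]
    exact convexOn_const 0 convex_univ
  | succ i ih =>
    intro j
    have hFrw : (fun m : Fin n → ℝ => z (i + 1) m j)
        = fun m => g i ((∑ q, Wz i j q * z i m q) +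
            ((∑ q, Wm i j q * m q) + b i j)) := by
      funext m
      rw [hrec i m j]
      simp [Matrix.mulVec, dotProduct, add_assoc]
    rw [hFrw]
    apply convexOn_comp_mono (hgconv i) (hgmono i)
    apply ConvexOn.add
    · -- sum over z-path
      apply convexOn_finset_sum
      intro q _
      rcases Nat.eq_zero_or_pos i with hi | hi
      · subst hi
        have : (fun m : Fin n → ℝ => Wz 0 j q * z 0 m q) = fun _ => 0 := by
          funext m; rw [h0 m]; simp
        rw [this]
        exact convexOn_const 0 convex_univ
      · exact (ih q).smul (hW i hi j q)
    · exact convexOn_affine _ _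
end

section
/- The Kohn–Strang–Dolzmann envelope satisfies Φ^pc ≤ Φ, where Φ(ν) = 1 + ν₁² + ν₂² if √(ν₁² + ν₂²) ≥ √2 − 1 and Φ(ν) = 2√2·√(ν₁² + ν₂²) otherwise, and Φ^pc is as in the piecewise definition with threshold |ν₁| + |ν₂| ≥ 1. -/
theorem ksd_envelope_le (ν : ℝ × ℝ) :
    (if 1 ≤ |ν.1| + |ν.2| then 1 + ν.1 ^ 2 + ν.2 ^ 2
      else 2 * (|ν.1| + |ν.2| - |ν.1 * ν.2|)) ≤
    (if Real.sqrt 2 - 1 ≤ Real.sqrt (ν.1 ^ 2 + ν.2 ^ 2) then 1 + ν.1 ^ 2 + ν.2 ^ 2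
      else 2 * Real.sqrt 2 * Real.sqrt (ν.1 ^ 2 + ν.2 ^ 2)) := by
  obtain ⟨x, y⟩ := ν
  simp only
  have hs0 : 0 ≤ Real.sqrt (x ^ 2 + y ^ 2) := Real.sqrt_nonneg _
  have hs2 : Real.sqrt (x ^ 2 + y ^ 2) ^ 2 = x ^ 2 + y ^ 2 :=
    Real.sq_sqrt (by positivity)
  have ht0 : 0 ≤ Real.sqrt 2 := Real.sqrt_nonneg _
  have ht2 : Real.sqrt 2 ^ 2 = 2 := Real.sq_sqrt (by norm_num)
  have hax : 0 ≤ |x| := abs_nonneg x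
  have hby : 0 ≤ |y| := abs_nonneg y
  have hax2 : |x| ^ 2 = x ^ 2 := sq_abs x
  have hby2 : |y| ^ 2 = y ^ 2 := sq_abs y
  have habs : |x * y| = |x| * |y| := abs_mul x y
  split_ifs with h1 h2 h2
  · exact le_refl _
  · exfalso
    push_neg at h2
    nlinarith [sq_nonneg (|x| - |y|), sq_nonneg (Real.sqrt 2 - 1 - Real.sqrt (x ^ 2 + y ^ 2)),
      mul_nonneg ht0 hs0]
  · rw [habs]
    nlinarith [sq_nonneg (1 - |x| - |y|)]
  · rw [habs]
    push_neg at h1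
    nlinarith [mul_nonneg hax hby, mul_nonneg ht0 hs0, sq_nonneg (|x| - |y|),
      sq_nonneg (|x| + |y| - Real.sqrt 2 * Real.sqrt (x ^ 2 + y ^ 2))]
end
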